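/- Let (a_{j₁},b_{j₁}), …, (a_{j_t},b_{j_t}) be integer pairs, each nonzero, such that the associated linear forms Λ_{j_k} = a_{j_k}α + b_{j_k}β are pairwise inequivalent (a_{j_k}b_{j_ℓ} − a_{j_ℓ}b_{j_k} ≠ 0 for k ≠ ℓ). Set Δ = ∏_{1 ≤ k < ℓ ≤ t} |a_{j_k}b_{j_ℓ} − a_{j_ℓ}b_{j_k}| and Ξ = Δ² ∏_{1 ≤ k ≤ t} gcd(a_{j_k}, b_{j_k}). For q ∈ ℕ and (c,d) ∈ ℤ², write u_{j_k} = gcd(q, c·a_{j_k} + d·b_{j_k}). Then: (i) whenever gcd(q,c,d) = 1, one has u_{j₁}u_{j₂}⋯u_{j_t} | Δq; and (ii) for any integers v₁, …, v_t with v₁v₂⋯v_t | Δq, the number of integral pairs (c,d) with 1 ≤ c,d ≤ q, gcd(c,d,q) = 1 and u_{j_k} = v_k for 1 ≤ k ≤ t is at most Ξ q² (v₁⋯v_t)^{−1}. -/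

import Mathlib

/-!
For (i): a common divisor of `u_k` and `u_l` divides `q` and both forms, hence `c·det` and `d·det`
for `det = a_k b_l - a_l b_k`; as `gcd(c, d, q) = 1` it divides `det`. Since every `u_k` divides
`q`, the product inequality `∏ u_k ∣ lcm(u) · ∏_{k<l} gcd(u_k, u_l)` then gives `∏ u_k ∣ qΔ`.

For (ii): reducing modulo `q` is injective on `[1, q]²`, and the residues of the counted pairs lie
in the subgroup `H ≤ (ℤ/q)²` cut out by the congruences `v_k ∣ c a_k + d b_k`, so there are at most
`|H| = q² / [(ℤ/q)² : H]` of them. A Bézout vector of `(a_k, b_k)` takes the value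
`gcd(a_k, b_k)` in the `k`-th congruence and `[(ℤ/q)² : H]` times it lies in `H`, so
`v_k ∣ [(ℤ/q)² : H] · gcd(a_k, b_k)`. The `v_k` are the `u_k` of a counted pair, so the product
inequality of (i) bounds `∏ v_k` by `[(ℤ/q)² : H] · ∏ gcd(a_k, b_k) · Δ`.
-/

open Finset

section PairwiseProd

variable {ι M : Type*} [LinearOrder ι] [CommMonoid M]

def pairwiseProd (s : Finset ι) (f : ι → ι → M) : M :=
  ∏ k ∈ s, ∏ l ∈ s with k < l, f k l

theorem pairwiseProd_insert_of_lt {s : Finset ι} {x : ι} (hx : ∀ y ∈ s, y < x)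
    (f : ι → ι → M) :
    pairwiseProd (insert x s) f = pairwiseProd s f * ∏ k ∈ s, f k x := by
  have hxs : x ∉ s := fun h => lt_irrefl x (hx x h)
  have hfilter : ∀ k ∈ s, {l ∈ insert x s | k < l} = insert x {l ∈ s | k < l} := fun k hk => by
    rw [filter_insert, if_pos (hx k hk)]
  rw [pairwiseProd, prod_insert hxs, filter_insert, if_neg (lt_irrefl x),
    filter_false_of_mem fun l hl => (hx l hl).not_gt, prod_empty, one_mul,
    prod_congr rfl fun k hk => by rw [hfilter k hk, prod_insert fun h => hxs (mem_filter.1 h).1],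
    prod_mul_distrib, mul_comm, pairwiseProd]

theorem pairwiseProd_dvd_pairwiseProd (s : Finset ι) {f g : ι → ι → M}
    (h : ∀ k l, f k l ∣ g k l) : pairwiseProd s f ∣ pairwiseProd s g :=
  prod_dvd_prod_of_dvd _ _ fun k _ => prod_dvd_prod_of_dvd _ _ fun l _ => h k l

end PairwiseProd

theorem Nat.gcd_finset_lcm_dvd_prod_gcd {ι : Type*} (a : ℕ) (s : Finset ι) (u : ι → ℕ) :
    Nat.gcd a (s.lcm u) ∣ ∏ k ∈ s, Nat.gcd a (u k) := by
  classical
  induction s using Finset.induction_on with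
  | empty => simp
  | insert x s hx ih =>
    rw [lcm_insert, prod_insert hx]
    calc Nat.gcd a (lcm (u x) (s.lcm u)) ∣ Nat.gcd a (u x * s.lcm u) :=
          Nat.gcd_dvd_gcd_of_dvd_right a (lcm_dvd_mul _ _)
      _ ∣ Nat.gcd a (u x) * Nat.gcd a (s.lcm u) := gcd_mul_dvd_mul_gcd a _ _
      _ ∣ Nat.gcd a (u x) * ∏ k ∈ s, Nat.gcd a (u k) := mul_dvd_mul_left _ ih

theorem prod_dvd_lcm_mul_pairwiseProd_gcd {ι : Type*} [LinearOrder ι] (s : Finset ι)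
    (u : ι → ℕ) :
    ∏ k ∈ s, u k ∣ s.lcm u * pairwiseProd s (fun k l => Nat.gcd (u k) (u l)) := by
  induction s using Finset.induction_on_max with
  | empty => simp [pairwiseProd]
  | insert x s hx ih =>
    have hxs : x ∉ s := fun h => lt_irrefl x (hx x h)
    have hgcd : Nat.gcd (u x) (s.lcm u) ∣ ∏ k ∈ s, Nat.gcd (u k) (u x) := by
      simpa only [Nat.gcd_comm (u x)] using Nat.gcd_finset_lcm_dvd_prod_gcd (u x) s u
    rw [prod_insert hxs, lcm_insert, pairwiseProd_insert_of_lt hx]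
    calc u x * ∏ k ∈ s, u k
        ∣ u x * (s.lcm u * pairwiseProd s fun k l => Nat.gcd (u k) (u l)) := mul_dvd_mul_left _ ih
      _ = Nat.lcm (u x) (s.lcm u) * Nat.gcd (u x) (s.lcm u) *
            pairwiseProd s fun k l => Nat.gcd (u k) (u l) := by
          rw [mul_comm (Nat.lcm _ _), Nat.gcd_mul_lcm, mul_assoc]
      _ ∣ _ := by
          rw [mul_assoc, mul_comm (pairwiseProd _ _)]
          exact mul_dvd_mul_left _ (mul_dvd_mul_right hgcd _)

theorem dvd_det_of_dvd_linearForms {g q c d a b a' b' : ℤ}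
    (hcdq : Int.gcd (Int.gcd c d : ℤ) q = 1) (hq : g ∣ q) (h : g ∣ c * a + d * b)
    (h' : g ∣ c * a' + d * b') :
    g ∣ a * b' - a' * b := by
  obtain ⟨x, y, hxy⟩ := Int.isCoprime_iff_gcd_eq_one.2 hcdq
  have hc : g ∣ c * (a * b' - a' * b) := by
    have e : c * (a * b' - a' * b) = b' * (c * a + d * b) - b * (c * a' + d * b') := by ring
    exact e ▸ dvd_sub (h.mul_left _) (h'.mul_left _)
  have hd : g ∣ d * (a * b' - a' * b) := by
    have e : d * (a * b' - a' * b) = a * (c * a' + d * b') - a' * (c * a + d * b) := by ring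
    exact e ▸ dvd_sub (h'.mul_left _) (h.mul_left _)
  have hgcd : g ∣ (Int.gcd c d : ℤ) * (a * b' - a' * b) := by
    rw [Int.gcd_eq_gcd_ab c d, add_mul, mul_right_comm, mul_right_comm d]
    exact dvd_add (hc.mul_right _) (hd.mul_right _)
  have e : a * b' - a' * b =
      x * ((Int.gcd c d : ℤ) * (a * b' - a' * b)) + y * (q * (a * b' - a' * b)) := by
    linear_combination (-(a * b' - a' * b)) * hxy
  rw [e]
  exact dvd_add (hgcd.mul_left _) ((hq.mul_right _).mul_left _)

theorem gcd_gcd_linearForms_dvd_natAbs_det {q c d : ℤ} (hcdq : Int.gcd (Int.gcd c d : ℤ) q = 1)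
    (a b a' b' : ℤ) :
    Nat.gcd (Int.gcd q (c * a + d * b)) (Int.gcd q (c * a' + d * b')) ∣
      (a * b' - a' * b).natAbs := by
  set u := Int.gcd q (c * a + d * b)
  set u' := Int.gcd q (c * a' + d * b')
  have hu : (Nat.gcd u u' : ℤ) ∣ u := Int.natCast_dvd_natCast.2 (Nat.gcd_dvd_left u u')
  have hu' : (Nat.gcd u u' : ℤ) ∣ u' := Int.natCast_dvd_natCast.2 (Nat.gcd_dvd_right u u')
  rw [← Int.natCast_dvd]
  exact dvd_det_of_dvd_linearForms hcdq (hu.trans (Int.gcd_dvd_left _ _))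
    (hu.trans (Int.gcd_dvd_right _ _)) (hu'.trans (Int.gcd_dvd_right _ _))

def linearFormMod {q v : ℕ} (h : v ∣ q) (a b : ℤ) : ZMod q × ZMod q →+ ZMod v :=
  AddMonoidHom.mk' (fun p => ZMod.castHom h (ZMod v) (p.1 * a + p.2 * b))
    fun p p' => by simp only [Prod.fst_add, Prod.snd_add, add_mul, map_add]; ring

theorem linearFormMod_intCast {q v : ℕ} (h : v ∣ q) (a b c d : ℤ) :
    linearFormMod h a b ((c : ZMod q), (d : ZMod q)) = ((c * a + d * b : ℤ) : ZMod v) := by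
  rw [← map_intCast (ZMod.castHom h (ZMod v))]
  push_cast
  rfl

theorem dvd_index_mul_gcd_of_le_ker {q v : ℕ} (h : v ∣ q) (a b : ℤ)
    {H : AddSubgroup (ZMod q × ZMod q)} (hH : H ≤ (linearFormMod h a b).ker) :
    v ∣ H.index * Int.gcd a b := by
  have hmem := hH (H.nsmul_index_mem ((Int.gcdA a b : ZMod q), (Int.gcdB a b : ZMod q)))
  rw [AddMonoidHom.mem_ker, map_nsmul, linearFormMod_intCast, mul_comm _ a, mul_comm _ b,
    ← Int.gcd_eq_gcd_ab] at hmem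
  rw [← ZMod.natCast_eq_zero_iff]
  push_cast [nsmul_eq_mul] at hmem ⊢
  exact hmem

theorem injOn_intCast_Icc (q : ℕ) : Set.InjOn (Int.cast : ℤ → ZMod q) (Set.Icc 1 q) := by
  intro c hc c' hc' h
  rw [ZMod.intCast_eq_intCast_iff_dvd_sub] at h
  have hlt : |c' - c| < q := abs_sub_lt_iff.2 ⟨by linarith [hc.1, hc'.2], by linarith [hc.2, hc'.1]⟩
  linarith [Int.eq_zero_of_abs_lt_dvd h hlt]

theorem prod_gcd_linearForms_dvd {ι : Type*} [LinearOrder ι] (s : Finset ι) (a b : ι → ℤ)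
    (q : ℕ) {c d : ℤ} (hcdq : Int.gcd (Int.gcd c d : ℤ) q = 1) :
    ∏ k ∈ s, Int.gcd q (c * a k + d * b k) ∣
      q * pairwiseProd s (fun k l => (a k * b l - a l * b k).natAbs) :=
  (prod_dvd_lcm_mul_pairwiseProd_gcd s _).trans <| mul_dvd_mul
    (Finset.lcm_dvd fun _ _ => Int.gcd_dvd_natAbs_left ..)
    (pairwiseProd_dvd_pairwiseProd s fun _ _ => gcd_gcd_linearForms_dvd_natAbs_det hcdq ..)

theorem ncard_le_ncard_of_intCast_mem {q : ℕ} [NeZero q] {T : Set (ℤ × ℤ)}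
    {X : Set (ZMod q × ZMod q)}
    (hT : ∀ p ∈ T, p.1 ∈ Set.Icc 1 (q : ℤ) ∧ p.2 ∈ Set.Icc 1 (q : ℤ) ∧
      ((p.1 : ZMod q), (p.2 : ZMod q)) ∈ X) :
    T.ncard ≤ X.ncard :=
  Set.ncard_le_ncard_of_injOn _ (fun p hp => (hT p hp).2.2) fun p hp p' hp' h =>
    Prod.ext (injOn_intCast_Icc q (hT p hp).1 (hT p' hp').1 (congrArg Prod.fst h))
      (injOn_intCast_Icc q (hT p hp).2.1 (hT p' hp').2.1 (congrArg Prod.snd h))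

theorem intCast_mem_iInf_ker_linearFormMod {ι : Type*} {q : ℕ} {v : ι → ℕ} (hv : ∀ k, v k ∣ q)
    (a b : ι → ℤ) (c d : ℤ) :
    ((c : ZMod q), (d : ZMod q)) ∈ ⨅ k, (linearFormMod (hv k) (a k) (b k)).ker ↔
      ∀ k, (v k : ℤ) ∣ c * a k + d * b k := by
  simp only [AddSubgroup.mem_iInf, AddMonoidHom.mem_ker, linearFormMod_intCast,
    ZMod.intCast_zmod_eq_zero_iff_dvd]

theorem ncard_mul_prod_le_of_dvd_linearForms {ι : Type*} [Fintype ι] [LinearOrder ι] {q : ℕ}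
    [NeZero q] (a b : ι → ℤ) (ha : ∀ k, Int.gcd (a k) (b k) ≠ 0) {v : ι → ℕ} (hv : ∀ k, v k ∣ q)
    {D : ℕ} (hD : D ≠ 0) (hvD : pairwiseProd univ (fun k l => Nat.gcd (v k) (v l)) ∣ D)
    {T : Set (ℤ × ℤ)} (hT : ∀ p ∈ T, p.1 ∈ Set.Icc 1 (q : ℤ) ∧ p.2 ∈ Set.Icc 1 (q : ℤ) ∧
      ∀ k, (v k : ℤ) ∣ p.1 * a k + p.2 * b k) :
    T.ncard * ∏ k, v k ≤ q ^ 2 * (∏ k, Int.gcd (a k) (b k)) * D := by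
  set H := ⨅ k, (linearFormMod (hv k) (a k) (b k)).ker
  set Γ := ∏ k, Int.gcd (a k) (b k)
  have hcard : T.ncard ≤ Nat.card H := by
    rw [← Nat.card_coe_set_eq]
    refine ncard_le_ncard_of_intCast_mem fun p hp => ⟨(hT p hp).1, (hT p hp).2.1, ?_⟩
    exact (intCast_mem_iInf_ker_linearFormMod hv a b _ _).2 (hT p hp).2.2
  have hlcm : univ.lcm v ∣ H.index * Γ := Finset.lcm_dvd fun k _ =>
    (dvd_index_mul_gcd_of_le_ker (hv k) _ _ (iInf_le _ k)).trans
      (mul_dvd_mul_left _ (dvd_prod_of_mem _ (mem_univ k)))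
  have hprod : ∏ k, v k ∣ H.index * Γ * D :=
    (prod_dvd_lcm_mul_pairwiseProd_gcd univ v).trans (mul_dvd_mul hlcm hvD)
  have hpos : 0 < H.index * Γ * D := by
    have := H.index_ne_zero_of_finite
    have : Γ ≠ 0 := prod_ne_zero_iff.2 fun k _ => ha k
    positivity
  calc T.ncard * ∏ k, v k ≤ Nat.card H * (H.index * Γ * D) :=
        Nat.mul_le_mul hcard (Nat.le_of_dvd hpos hprod)
    _ = q ^ 2 * Γ * D := by
        rw [← mul_assoc, ← mul_assoc, H.card_mul_index, Nat.card_prod, Nat.card_zmod, sq]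

theorem lemma11_general (t : ℕ) (a b : Fin t → ℤ)
    (hpair : ∀ k, (a k, b k) ≠ (0, 0))
    (hinequiv : ∀ k ℓ : Fin t, k ≠ ℓ → a k * b ℓ - a ℓ * b k ≠ 0)
    (Δ : ℤ) (hΔ : Δ = ∏ k : Fin t, ∏ ℓ ∈ Finset.univ.filter (fun ℓ : Fin t => k < ℓ),
      |a k * b ℓ - a ℓ * b k|)
    (Ξ : ℤ) (hΞ : Ξ = Δ ^ 2 * ∏ k : Fin t, (Int.gcd (a k) (b k) : ℤ))
    (q : ℕ) :
    (∀ c d : ℤ, Int.gcd (Int.gcd c d : ℤ) (q : ℤ) = 1 →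
      (∏ k : Fin t, (Int.gcd (q : ℤ) (c * a k + d * b k) : ℤ)) ∣ Δ * q) ∧
    (∀ v : Fin t → ℕ, (∏ k : Fin t, (v k : ℤ)) ∣ Δ * q →
      (({p : ℤ × ℤ | 1 ≤ p.1 ∧ p.1 ≤ q ∧ 1 ≤ p.2 ∧ p.2 ≤ q ∧
          Int.gcd (Int.gcd p.1 p.2 : ℤ) (q : ℤ) = 1 ∧
          ∀ k : Fin t, Int.gcd (q : ℤ) (p.1 * a k + p.2 * b k) = v k}.ncard : ℝ) ≤
        (Ξ : ℝ) * (q : ℝ) ^ 2 / ∏ k : Fin t, (v k : ℝ))) := by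
  set D := pairwiseProd univ fun k l => (a k * b l - a l * b k).natAbs
  have hΔD : Δ = D := by rw [hΔ]; push_cast [D, pairwiseProd, Int.natCast_natAbs]; rfl
  subst hΞ hΔD
  refine ⟨fun c d hcd => ?_, fun v _ => ?_⟩
  · rw [mul_comm]
    exact_mod_cast prod_gcd_linearForms_dvd univ a b q hcd
  set S := {p : ℤ × ℤ | 1 ≤ p.1 ∧ p.1 ≤ q ∧ 1 ≤ p.2 ∧ p.2 ≤ q ∧
    Int.gcd (Int.gcd p.1 p.2 : ℤ) (q : ℤ) = 1 ∧
    ∀ k : Fin t, Int.gcd (q : ℤ) (p.1 * a k + p.2 * b k) = v k}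
  obtain hS | ⟨⟨c, d⟩, hc, hcq, -, -, hcd, hv⟩ := S.eq_empty_or_nonempty
  · rw [hS, Set.ncard_empty, Nat.cast_zero]
    positivity
  have : NeZero q := ⟨by omega⟩
  have hvq : ∀ k, v k ∣ q := fun k => hv k ▸ Int.gcd_dvd_natAbs_left ..
  have hv0 : ∀ k, v k ≠ 0 := fun k h => NeZero.ne q (Nat.eq_zero_of_zero_dvd (h ▸ hvq k))
  have hD : D ≠ 0 := prod_ne_zero_iff.2 fun k _ => prod_ne_zero_iff.2 fun l hl =>
    Int.natAbs_ne_zero.2 (hinequiv k l (mem_filter.1 hl).2.ne)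
  have hvD : pairwiseProd univ (fun k l => Nat.gcd (v k) (v l)) ∣ D := by
    simp only [← hv]
    exact pairwiseProd_dvd_pairwiseProd univ fun _ _ => gcd_gcd_linearForms_dvd_natAbs_det hcd ..
  have hcount := ncard_mul_prod_le_of_dvd_linearForms a b
    (fun k h => hpair k (by simpa using h)) hvq hD hvD
    (T := S) fun p ⟨h1, h2, h3, h4, _, hp⟩ =>
      ⟨⟨h1, h2⟩, ⟨h3, h4⟩, fun k => hp k ▸ Int.gcd_dvd_right ..⟩
  rw [le_div_iff₀ (prod_pos fun k _ => by simpa [Nat.pos_iff_ne_zero] using hv0 k)]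
  have : S.ncard * ∏ k, v k ≤ D ^ 2 * (∏ k, Int.gcd (a k) (b k)) * q ^ 2 := by
    calc _ ≤ q ^ 2 * (∏ k, Int.gcd (a k) (b k)) * D := hcount
      _ ≤ q ^ 2 * (∏ k, Int.gcd (a k) (b k)) * D * D := Nat.le_mul_of_pos_right _ (by omega)
      _ = _ := by ring
  exact_mod_cast this

/-- **Lemma 11.** Let (a_k, b_k) (1 ≤ k ≤ t) be nonzero integer pairs with pairwise
inequivalent associated linear forms (a_kb_ℓ − a_ℓb_k ≠ 0 for k ≠ ℓ). Put
Δ = ∏_{k<ℓ} |a_kb_ℓ − a_ℓb_k| and Ξ = Δ² ∏_k gcd(a_k, b_k), and for q ∈ ℕ, (c,d) ∈ ℤ²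
write u_k = gcd(q, c·a_k + d·b_k). Then (i) gcd(q,c,d) = 1 implies u₁⋯u_t ∣ Δq, and
(ii) for integers v₁, …, v_t with v₁⋯v_t ∣ Δq, the number of pairs (c,d) with
1 ≤ c,d ≤ q, gcd(c,d,q) = 1 and u_k = v_k (1 ≤ k ≤ t) is at most Ξq²(v₁⋯v_t)⁻¹. -/
theorem lemma11 (t : ℕ) (a b : Fin t → ℤ)
    (hpair : ∀ k, (a k, b k) ≠ (0, 0))
    (hinequiv : ∀ k ℓ : Fin t, k ≠ ℓ → a k * b ℓ - a ℓ * b k ≠ 0)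
    (Δ : ℤ) (hΔ : Δ = ∏ k : Fin t, ∏ ℓ ∈ Finset.univ.filter (fun ℓ : Fin t => k < ℓ),
      |a k * b ℓ - a ℓ * b k|)
    (Ξ : ℤ) (hΞ : Ξ = Δ ^ 2 * ∏ k : Fin t, (Int.gcd (a k) (b k) : ℤ))
    (q : ℕ) (hq : 0 < q) :
    (∀ c d : ℤ, Int.gcd (Int.gcd c d : ℤ) (q : ℤ) = 1 →
      (∏ k : Fin t, (Int.gcd (q : ℤ) (c * a k + d * b k) : ℤ)) ∣ Δ * q) ∧
    (∀ v : Fin t → ℕ, (∏ k : Fin t, (v k : ℤ)) ∣ Δ * q →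
      (({p : ℤ × ℤ | 1 ≤ p.1 ∧ p.1 ≤ q ∧ 1 ≤ p.2 ∧ p.2 ≤ q ∧
          Int.gcd (Int.gcd p.1 p.2 : ℤ) (q : ℤ) = 1 ∧
          ∀ k : Fin t, Int.gcd (q : ℤ) (p.1 * a k + p.2 * b k) = v k}.ncard : ℝ) ≤
        (Ξ : ℝ) * (q : ℝ) ^ 2 / ∏ k : Fin t, (v k : ℝ))) :=
  lemma11_general t a b hpair hinequiv Δ hΔ Ξ hΞ q
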